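/- arXiv:2509.06527 — 3 statements merged into one kernel-verified Lean document; each statement's English description precedes it below -/
import Mathlib

section
/- Let p be a prime and A a Noetherian commutative ring such that p is a nonzerodivisor on A, p lies in the Jacobson radical of A, and A/pA is reduced. Then every Frobenius lift φ : A → A is injective. -/
/-!
The kernel `K` of a Frobenius lift `φ` satisfies `K ⊆ p • K`: if `φ a = 0` then `a ^ p ∈ pA`,
so `a = p b` because `A/pA` is reduced, and `p φ(b) = φ(a) = 0` forces `φ b = 0` since `p` is
a nonzerodivisor. As `K` is finitely generated and `p` lies in the Jacobson radical,
Nakayama's lemma gives `K = 0`.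
-/

namespace RingHom

variable {A : Type*} [CommRing A]

theorem ker_le_of_sub_pow_mem {I : Ideal A} (hI : I.IsRadical) (φ : A →+* A) (n : ℕ)
    (hφ : ∀ a, φ a - a ^ n ∈ I) : ker φ ≤ I := by
  intro a ha
  have hpow : a ^ n ∈ I := by
    simpa [(mem_ker).mp ha] using I.neg_mem (hφ a)
  exact hI ⟨n, hpow⟩

theorem ker_le_span_smul_ker (φ : A →+* A) {n : ℕ} (hn : (n : A) ∈ nonZeroDivisors A)
    (hker : ker φ ≤ Ideal.span {(n : A)}) : ker φ ≤ Ideal.span {(n : A)} • ker φ := by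
  intro a ha
  obtain ⟨b, rfl⟩ := Ideal.mem_span_singleton.mp (hker ha)
  have hb : b ∈ ker φ := hn.1 _ <| by simpa [mem_ker] using ha
  exact Submodule.smul_mem_smul (Ideal.mem_span_singleton_self _) hb

end RingHom

theorem frobeniusLift_injective_general {A : Type*} [CommRing A] [IsNoetherianRing A]
    (p : ℕ)
    (hnzd : (p : A) ∈ nonZeroDivisors A)
    (hjac : (p : A) ∈ Ideal.jacobson (⊥ : Ideal A))
    (hred : IsReduced (A ⧸ Ideal.span {(p : A)}))
    (φ : A →+* A) (hφ : ∀ a : A, φ a - a ^ p ∈ Ideal.span {(p : A)}) :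
    Function.Injective φ := by
  have hker : RingHom.ker φ ≤ Ideal.span {(p : A)} :=
    φ.ker_le_of_sub_pow_mem ((Ideal.isRadical_iff_quotient_reduced _).mpr hred) p hφ
  have hspan : Ideal.span {(p : A)} ≤ Ideal.jacobson ⊥ :=
    (Ideal.span_singleton_le_iff_mem _).mpr hjac
  rw [RingHom.injective_iff_ker_eq_bot]
  exact Submodule.eq_bot_of_le_smul_of_le_jacobson_bot _ _ (IsNoetherian.noetherian _)
    (φ.ker_le_span_smul_ker hnzd hker) hspan

/-- **Injectivity of Frobenius lifts.**
Let `p` be a prime and `A` a Noetherian commutative ring such that `p` is a nonzerodivisor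
on `A`, `p` lies in the Jacobson radical of `A`, and `A/pA` is reduced.
Then every Frobenius lift `φ : A → A` (a ring homomorphism with `φ a ≡ a ^ p (mod pA)`
for all `a`) is injective. -/
theorem frobeniusLift_injective {A : Type*} [CommRing A] [IsNoetherianRing A]
    (p : ℕ) (hp : p.Prime)
    (hnzd : (p : A) ∈ nonZeroDivisors A)
    (hjac : (p : A) ∈ Ideal.jacobson (⊥ : Ideal A))
    (hred : IsReduced (A ⧸ Ideal.span {(p : A)}))
    (φ : A →+* A) (hφ : ∀ a : A, φ a - a ^ p ∈ Ideal.span {(p : A)}) :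
    Function.Injective φ :=
  frobeniusLift_injective_general p hnzd hjac hred φ hφ
end

section
/- Let p be a prime and let R = ℤ_p⟦x⟧/(px), the quotient of the power series ring over the p-adic integers by the principal ideal generated by p·x. Then R admits no p-derivation: there is no function δ : R → R with δ(0) = δ(1) = 0 satisfying δ(ab) = a^p δ(b) + b^p δ(a) + p δ(a) δ(b) for all a, b ∈ R, and δ(a+b) = δ(a) + δ(b) − Σ_{i=1}^{p−1} c_i a^i b^{p−i} for all a, b ∈ R, where c_i denotes the integer binom(p,i)/p. In particular, R carries no δ-ring structure. -/
/-!
If `δ` is a `p`-derivation, the sum rule forces `δ n = (n - n ^ p) / p` on natural numbers, so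
`δ p = 1 - p ^ (p - 1)`. If `p * x = 0`, the product rule for `δ (p * x)` multiplied by `x` leaves
`x ^ (p + 1) * δ p = 0`, and since also `p ^ (p - 1) * x = 0`, this says `x ^ (p + 1) = 0`.
In `ℤ_p⟦x⟧/(px)` the class of `x` is killed by `p`, yet `x ^ (p + 1) ∉ (p x)` because `p` is not
a unit of `ℤ_p`.
-/

/-- The ring `ℤ_p⟦x⟧/(px)`: the quotient of the power series ring over the `p`-adic
integers by the principal ideal generated by `p·x`. -/
def PadicSeriesQuot (p : ℕ) [Fact p.Prime] : Type :=
  PowerSeries ℤ_[p] ⧸ Ideal.span {(p : PowerSeries ℤ_[p]) * PowerSeries.X}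

noncomputable instance (p : ℕ) [Fact p.Prime] : CommRing (PadicSeriesQuot p) :=
  inferInstanceAs
    (CommRing (PowerSeries ℤ_[p] ⧸ Ideal.span {(p : PowerSeries ℤ_[p]) * PowerSeries.X}))

open Finset

structure IsPDerivation (p : ℕ) {A : Type*} [CommRing A] (δ : A → A) : Prop where
  map_zero : δ 0 = 0
  map_one : δ 1 = 0
  map_mul : ∀ a b : A, δ (a * b) = a ^ p * δ b + b ^ p * δ a + (p : A) * δ a * δ b
  map_add : ∀ a b : A, δ (a + b) = δ a + δ b -
    ∑ i ∈ Ioo 0 p, ((p.choose i / p : ℕ) : A) * a ^ i * b ^ (p - i)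

namespace IsPDerivation

variable {p : ℕ} {A : Type*} [CommRing A] {δ : A → A}

theorem map_natCast (hp : p.Prime) (hδ : IsPDerivation p δ) (n : ℕ) :
    δ n = ((((n : ℤ) - (n : ℤ) ^ p) / p : ℤ) : A) := by
  induction n with
  | zero => simp [hδ.map_zero, zero_pow hp.ne_zero]
  | succ n ih =>
    set S : ℤ := ∑ i ∈ Ioo 0 p, (n : ℤ) ^ i * ((p.choose i / p : ℕ) : ℤ)
    have hbinom : ((n : ℤ) + 1) ^ p = (n : ℤ) ^ p + 1 + p * S := by
      simpa only [one_pow, mul_one] using add_pow_prime_eq' hp (n : ℤ) 1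
    have hquot : (((n + 1 : ℕ) : ℤ) - ((n + 1 : ℕ) : ℤ) ^ p) / p =
        ((n : ℤ) - (n : ℤ) ^ p) / p - S := by
      rw [sub_eq_add_neg _ S, ← Int.add_mul_ediv_right _ _ (by exact_mod_cast hp.ne_zero)]
      push_cast
      rw [hbinom]
      ring_nf
    rw [Nat.cast_succ, hδ.map_add, hδ.map_one, ih, hquot, Int.cast_sub, Int.cast_sum]
    simp only [add_zero, one_pow, mul_one, Int.cast_mul, Int.cast_pow, Int.cast_natCast, mul_comm]

theorem map_natCast_self (hp : p.Prime) (hδ : IsPDerivation p δ) :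
    δ p = 1 - (p : A) ^ (p - 1) := by
  have hsplit : (p : ℤ) - (p : ℤ) ^ p = p * (1 - (p : ℤ) ^ (p - 1)) := by
    rw [mul_sub, mul_one, ← pow_succ', Nat.sub_add_cancel hp.one_le]
  rw [hδ.map_natCast hp, hsplit, Int.mul_ediv_cancel_left _ (by exact_mod_cast hp.ne_zero)]
  norm_cast

theorem pow_succ_eq_zero_of_mul_eq_zero (hp : p.Prime) (hδ : IsPDerivation p δ) {x : A}
    (hx : (p : A) * x = 0) : x ^ (p + 1) = 0 := by
  have hprod := hδ.map_mul p x
  rw [hx, hδ.map_zero, hδ.map_natCast_self hp] at hprod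
  have hpow : ∀ k, 1 ≤ k → (p : A) ^ k * x = 0 := fun k hk => by
    rw [← Nat.sub_add_cancel hk, pow_succ, mul_assoc, hx, mul_zero]
  linear_combination (-x) * hprod - δ x * hpow p hp.one_le + x ^ p * hpow (p - 1) (by
    have := hp.two_le; omega) - (1 - (p : A) ^ (p - 1)) * δ x * hx

end IsPDerivation

theorem PowerSeries.X_pow_succ_notMem_span_C_mul_X {R : Type*} [CommRing R] {a : R}
    (ha : ¬IsUnit a) (n : ℕ) : X ^ (n + 1) ∉ Ideal.span {C a * X} := by
  intro hmem
  obtain ⟨g, hg⟩ := Ideal.mem_span_singleton'.mp hmem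
  have hcoeff := congrArg (coeff (n + 1)) hg
  rw [mul_comm, mul_assoc, coeff_C_mul, coeff_succ_X_mul, coeff_X_pow_self] at hcoeff
  exact ha (.of_mul_eq_one _ hcoeff)

/-- **`ℤ_p⟦x⟧/(px)` carries no δ-ring structure.**
Let `p` be a prime and let `R = ℤ_p⟦x⟧/(px)`.  Then `R` admits no `p`-derivation:
there is no function `δ : R → R` with `δ 0 = δ 1 = 0` satisfying the product rule
`δ(ab) = a^p δ(b) + b^p δ(a) + p δ(a) δ(b)` and the sum rule
`δ(a+b) = δ(a) + δ(b) - ∑_{i=1}^{p-1} (C(p,i)/p) a^i b^(p-i)`,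
where `C(p,i)/p` denotes the integer `p.choose i / p`.
In particular, `R` carries no δ-ring structure. -/
theorem no_delta_structure_on_padic_quotient (p : ℕ) [hp : Fact p.Prime] :
    ¬ ∃ δ : PadicSeriesQuot p → PadicSeriesQuot p,
      δ 0 = 0 ∧ δ 1 = 0 ∧
      (∀ a b : PadicSeriesQuot p,
        δ (a * b) = a ^ p * δ b + b ^ p * δ a + (p : PadicSeriesQuot p) * δ a * δ b) ∧
      (∀ a b : PadicSeriesQuot p,
        δ (a + b) = δ a + δ b -
          ∑ i ∈ Finset.Ioo 0 p,
            ((p.choose i / p : ℕ) : PadicSeriesQuot p) * a ^ i * b ^ (p - i)) := by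
  rintro ⟨δ, h0, h1, hmul, hadd⟩
  let x : PadicSeriesQuot p := Ideal.Quotient.mk _ PowerSeries.X
  have hx : (p : PadicSeriesQuot p) * x = 0 :=
    Ideal.Quotient.eq_zero_iff_mem.mpr (Ideal.mem_span_singleton_self _)
  have hnil : x ^ (p + 1) = 0 :=
    (IsPDerivation.mk h0 h1 hmul hadd).pow_succ_eq_zero_of_mul_eq_zero hp.out hx
  refine PowerSeries.X_pow_succ_notMem_span_C_mul_X (PadicInt.p_nonunit (p := p)) p ?_
  rw [map_natCast]
  exact Ideal.Quotient.eq_zero_iff_mem.mp hnil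
end

section
/- Let A be an integral domain and x ∈ A a nonzero element. If the quotient A/xA is reduced and the localization A[1/x] is integrally closed in its fraction field, then A is integrally closed in its fraction field. -/
/-!
An element `y` of the fraction field that is integral over `A` is integral over `A[1/x]`, hence
lies in it: `x ^ n * y = a` for some `a ∈ A`. If `n > 0`, then `a / x = x ^ (n - 1) * y` is
integral over `A`; scaling a monic equation of degree `d` for it by `x ^ d` gives a monic equation
for `a` whose reduction mod `x` is `X ^ d`, so `a` is nilpotent in `A/xA`, hence `x ∣ a`. Cancelling
one factor of `x` lowers `n`, and at `n = 0` we get `y ∈ A`.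
-/

open Polynomial

theorem Polynomial.Monic.map_scaleRoots_eq_X_pow {R S : Type*} [Semiring R] [Semiring S]
    {p : R[X]} (hp : p.Monic) {f : R →+* S} {s : R} (hs : f s = 0) :
    (p.scaleRoots s).map f = X ^ p.natDegree := by
  ext j
  rw [coeff_map, coeff_X_pow, coeff_scaleRoots]
  rcases lt_trichotomy j p.natDegree with hj | rfl | hj
  · rw [map_mul, map_pow, hs, zero_pow (by omega), mul_zero, if_neg hj.ne]
  · rw [hp.coeff_natDegree, Nat.sub_self, pow_zero, one_mul, map_one, if_pos rfl]
  · rw [coeff_eq_zero_of_natDegree_lt hj, zero_mul, map_zero, if_neg hj.ne']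

theorem dvd_of_isIntegral_of_algebraMap_mul_eq {A B : Type*} [CommRing A] [CommRing B]
    [Algebra A B] (hinj : Function.Injective (algebraMap A B)) {x a : A}
    [IsReduced (A ⧸ Ideal.span {x})] {y : B} (hy : IsIntegral A y)
    (hxy : algebraMap A B x * y = algebraMap A B a) : x ∣ a := by
  obtain ⟨p, hp, hpy⟩ := hy
  have hroot : (p.scaleRoots x).eval a = 0 := by
    apply hinj
    rw [map_zero, ← coe_aeval_eq_eval, ← aeval_algebraMap_apply, ← hxy]
    exact scaleRoots_aeval_eq_zero hpy
  set f := Ideal.Quotient.mk (Ideal.span {x})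
  have hnil : IsNilpotent (f a) := by
    refine ⟨p.natDegree, ?_⟩
    calc f a ^ p.natDegree = ((p.scaleRoots x).map f).eval (f a) := by
          rw [hp.map_scaleRoots_eq_X_pow (Ideal.Quotient.eq_zero_iff_mem.mpr
            (Ideal.mem_span_singleton_self x)), eval_X_pow]
      _ = 0 := by rw [eval_map_apply, hroot, map_zero]
  exact Ideal.mem_span_singleton.mp (Ideal.Quotient.eq_zero_iff_mem.mp hnil.eq_zero)

theorem exists_algebraMap_eq_of_pow_mul_eq_algebraMap {A B : Type*} [CommRing A] [CommRing B]
    [Algebra A B] (hinj : Function.Injective (algebraMap A B)) {x : A}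
    [IsReduced (A ⧸ Ideal.span {x})] (hx : IsLeftRegular (algebraMap A B x)) {y : B}
    (hy : IsIntegral A y) {n : ℕ} {a : A} (h : algebraMap A B x ^ n * y = algebraMap A B a) :
    ∃ b, algebraMap A B b = y := by
  induction n generalizing a with
  | zero => exact ⟨a, by simpa using h.symm⟩
  | succ n ih =>
    have hxy : algebraMap A B x * (algebraMap A B x ^ n * y) = algebraMap A B a := by
      rw [← mul_assoc, ← pow_succ', h]
    obtain ⟨b, rfl⟩ := dvd_of_isIntegral_of_algebraMap_mul_eq hinj
      ((isIntegral_algebraMap.pow n).mul hy) hxy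
    exact ih (hx (hxy.trans (map_mul _ _ _)))

theorem IsLocalization.exists_mul_eq_algebraMap_of_isIntegral {A : Type*} [CommRing A]
    {M : Submonoid A} (hM : M ≤ nonZeroDivisors A) (B : Type*) [CommRing B]
    [Algebra A B] [IsLocalization M B] [IsIntegrallyClosed B] {K : Type*} [Field K]
    [Algebra A K] [IsFractionRing A K] {y : K} (hy : IsIntegral A y) :
    ∃ m ∈ M, ∃ a, algebraMap A K m * y = algebraMap A K a := by
  let : Algebra B K := localizationAlgebraOfSubmonoidLe B K M (nonZeroDivisors A) hM
  have : IsScalarTower A B K := localization_isScalarTower_of_submonoid_le B K M _ hM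
  have : IsFractionRing B K := IsFractionRing.isFractionRing_of_isLocalization M B K hM
  obtain ⟨z, hz⟩ := (IsIntegrallyClosed.isIntegral_iff (R := B)).mp hy.tower_top
  obtain ⟨⟨a, m⟩, hzm⟩ := IsLocalization.surj M z
  refine ⟨m, m.2, a, ?_⟩
  rw [mul_comm]
  simpa only [map_mul, hz, ← IsScalarTower.algebraMap_apply] using congrArg (algebraMap B K) hzm

/-- **A normality criterion.**
Let `A` be an integral domain and `x ∈ A` a nonzero element.  If the quotient `A/xA` is
reduced and the localization `A[1/x]` is integrally closed in its fraction field, then `A`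
is integrally closed in its fraction field. -/
theorem isIntegrallyClosed_of_quotient_reduced_of_away {A : Type*} [CommRing A] [IsDomain A]
    (x : A) (hx : x ≠ 0)
    (hred : IsReduced (A ⧸ Ideal.span {x}))
    (hic : IsIntegrallyClosed (Localization.Away x)) :
    IsIntegrallyClosed A := by
  rw [isIntegrallyClosed_iff (FractionRing A)]
  intro y hy
  obtain ⟨_, ⟨n, rfl⟩, a, hya⟩ := IsLocalization.exists_mul_eq_algebraMap_of_isIntegral
    (powers_le_nonZeroDivisors_of_noZeroDivisors hx) (Localization.Away x) hy
  have hx' : IsLeftRegular (algebraMap A (FractionRing A) x) :=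
    (IsRegular.of_ne_zero (IsFractionRing.to_map_ne_zero_of_mem_nonZeroDivisors
      (mem_nonZeroDivisors_of_ne_zero hx))).left
  exact exists_algebraMap_eq_of_pow_mul_eq_algebraMap (IsFractionRing.injective A _) hx' hy
    (by rwa [← map_pow])
end
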